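/- Let Φ be a vector in ℂ^(V × {0,…,d−1}) satisfying W Φ = Φ, and set a_u = ⟨ψ_u, Φ⟩. Then a_u = a_v for every pair of adjacent vertices u, v (i.e. whenever A(u,v) ≠ 0). Consequently, if in addition any two vertices of the graph are joined by a path of edges and Φ is orthogonal to the uniform superposition state (1/√(dN)) Σ_x e_x (where N = |V|), then a_u = 0 for all u ∈ V. -/

import Mathlib

open scoped InnerProductSpace
open Complex

/-- The coin state `ψ_u = (1/√d) Σ_g e_{(u,g)}`. -/
noncomputable def psiState (V : Type*) [Fintype V] [DecidableEq V] (d : ℕ) (u : V) :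
    EuclideanSpace ℂ (V × Fin d) :=
  WithLp.toLp 2 (fun x => if x.1 = u then ((1 / Real.sqrt d : ℝ) : ℂ) else 0)

/-- The coin operator `C = 2 Σ_u |ψ_u⟩⟨ψ_u| − I` applied to a vector. -/
noncomputable def coinOp {V : Type*} [Fintype V] [DecidableEq V] {d : ℕ}
    (Φ : EuclideanSpace ℂ (V × Fin d)) : EuclideanSpace ℂ (V × Fin d) :=
  (2 : ℂ) • (∑ u : V, ⟪psiState V d u, Φ⟫_ℂ • psiState V d u) - Φ

/-- The flip-flop walk operator `W = S C`, where `S e_x = e_{σ(x)}`. -/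
noncomputable def walkOp {V : Type*} [Fintype V] [DecidableEq V] {d : ℕ}
    (σ : V × Fin d → V × Fin d) (Φ : EuclideanSpace ℂ (V × Fin d)) :
    EuclideanSpace ℂ (V × Fin d) :=
  WithLp.toLp 2 (fun x => coinOp Φ (σ x))

/-- The normalized adjacency matrix entry `A(u,v) = |{g : (σ(u,g)).1 = v}| / d`. -/
noncomputable def adjEntry {V : Type*} [Fintype V] [DecidableEq V] {d : ℕ}
    (σ : V × Fin d → V × Fin d) (u v : V) : ℝ :=
  (Finset.univ.filter (fun g : Fin d => (σ (u, g)).1 = v)).card / d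

/-- The uniform superposition state `(1/√(dN)) Σ_x e_x`. -/
noncomputable def uniformState (V : Type*) [Fintype V] (d : ℕ) :
    EuclideanSpace ℂ (V × Fin d) :=
  WithLp.toLp 2 (fun _ => ((1 / Real.sqrt (d * Fintype.card V) : ℝ) : ℂ))

/-!
Evaluating `W Φ = Φ` at `σ x` gives `Φ (σ x) + Φ x = (2 / √d) a_{x.1}`. The left side is
invariant under the involution `σ`, so `a` takes the same value at both ends of every edge.
Since `uniformState = N^{-1/2} Σ_u ψ_u`, orthogonality to it says `Σ_u a_u = 0`; on a connected
graph `a` is constant, hence zero.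
-/

section FlipFlopWalk

variable {V : Type*} [Fintype V] [DecidableEq V] {d : ℕ}

theorem psiState_apply (u : V) (x : V × Fin d) :
    psiState V d u x = if x.1 = u then ((1 / Real.sqrt d : ℝ) : ℂ) else 0 :=
  rfl

theorem coinOp_apply (Φ : EuclideanSpace ℂ (V × Fin d)) (x : V × Fin d) :
    coinOp Φ x = 2 * ((1 / Real.sqrt d : ℝ) : ℂ) * ⟪psiState V d x.1, Φ⟫_ℂ - Φ x := by
  have hsum : (∑ u : V, ⟪psiState V d u, Φ⟫_ℂ • psiState V d u) x
      = ⟪psiState V d x.1, Φ⟫_ℂ * ((1 / Real.sqrt d : ℝ) : ℂ) := by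
    rw [WithLp.ofLp_sum, Finset.sum_apply, Finset.sum_eq_single x.1]
    · simp [psiState_apply]
    · intro u _ hu
      simp [psiState_apply, Ne.symm hu]
    · simp
  simp only [coinOp, PiLp.sub_apply, PiLp.smul_apply, smul_eq_mul, hsum]
  ring

variable {σ : V × Fin d → V × Fin d}

theorem apply_rotation_add_apply_of_walkOp_eq_self (hσ : ∀ x, σ (σ x) = x)
    {Φ : EuclideanSpace ℂ (V × Fin d)} (hW : walkOp σ Φ = Φ) (x : V × Fin d) :
    Φ (σ x) + Φ x = 2 * ((1 / Real.sqrt d : ℝ) : ℂ) * ⟪psiState V d x.1, Φ⟫_ℂ := by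
  have h : coinOp Φ x = Φ (σ x) := by
    simpa [walkOp, hσ] using congrFun (congrArg WithLp.ofLp hW) (σ x)
  rw [← h, coinOp_apply]
  ring

theorem inner_psiState_rotation_of_walkOp_eq_self (hσ : ∀ x, σ (σ x) = x)
    {Φ : EuclideanSpace ℂ (V × Fin d)} (hW : walkOp σ Φ = Φ) (x : V × Fin d) :
    ⟪psiState V d (σ x).1, Φ⟫_ℂ = ⟪psiState V d x.1, Φ⟫_ℂ := by
  have hd : ((1 / Real.sqrt d : ℝ) : ℂ) ≠ 0 := by
    have : (0 : ℝ) < d := by exact_mod_cast x.2.pos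
    simpa using this.ne'
  -- `Φ (σ x) + Φ x` is invariant under the involution `x ↦ σ x`.
  have h := apply_rotation_add_apply_of_walkOp_eq_self hσ hW (σ x)
  rw [hσ, add_comm, apply_rotation_add_apply_of_walkOp_eq_self hσ hW x] at h
  exact (mul_left_cancel₀ (mul_ne_zero two_ne_zero hd) h).symm

theorem exists_rotation_eq_of_adjEntry_ne_zero {u v : V} (h : adjEntry σ u v ≠ 0) :
    ∃ g : Fin d, (σ (u, g)).1 = v := by
  by_contra! hno
  apply h
  simp [adjEntry, Finset.filter_eq_empty_iff.mpr fun g _ => hno g]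

theorem uniformState_eq_smul_sum_psiState :
    uniformState V d = ((1 / Real.sqrt (Fintype.card V) : ℝ) : ℂ) • ∑ u : V, psiState V d u := by
  ext x
  rw [PiLp.smul_apply, WithLp.ofLp_sum, Finset.sum_apply, Finset.sum_eq_single x.1]
  · simp [uniformState, psiState_apply, Real.sqrt_mul (Nat.cast_nonneg d), mul_comm]
  · intro u _ hu
    simp [psiState_apply, Ne.symm hu]
  · simp

theorem inner_uniformState (Φ : EuclideanSpace ℂ (V × Fin d)) :
    ⟪uniformState V d, Φ⟫_ℂ
      = ((1 / Real.sqrt (Fintype.card V) : ℝ) : ℂ) * ∑ u : V, ⟪psiState V d u, Φ⟫_ℂ := by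
  rw [uniformState_eq_smul_sum_psiState, inner_smul_left, sum_inner, conj_ofReal]

end FlipFlopWalk

theorem walk_fixed_vector_constant_overlaps_general
    {V : Type*} [Fintype V] [DecidableEq V] {d : ℕ}
    (σ : V × Fin d → V × Fin d) (hσ : ∀ x, σ (σ x) = x)
    (Φ : EuclideanSpace ℂ (V × Fin d)) (hW : walkOp σ Φ = Φ)
    (a : V → ℂ) (ha : ∀ u, a u = ⟪psiState V d u, Φ⟫_ℂ) :
    (∀ u v : V, adjEntry σ u v ≠ 0 → a u = a v) ∧
    ((∀ u v : V, Relation.ReflTransGen (fun p q : V => adjEntry σ p q ≠ 0) u v) →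
      ⟪uniformState V d, Φ⟫_ℂ = 0 → ∀ u : V, a u = 0) := by
  have adj : ∀ u v : V, adjEntry σ u v ≠ 0 → a u = a v := by
    intro u v huv
    obtain ⟨g, rfl⟩ := exists_rotation_eq_of_adjEntry_ne_zero huv
    simpa only [ha] using (inner_psiState_rotation_of_walkOp_eq_self hσ hW (u, g)).symm
  refine ⟨adj, fun hconn horth u => ?_⟩
  have : Nonempty V := ⟨u⟩
  have hconst : ∀ v, a v = a u := fun v => by
    simpa [Relation.reflTransGen_eq_self] using ((hconn v u).lift a adj)
  have hsum : ∑ v : V, a v = 0 := by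
    rw [inner_uniformState, mul_eq_zero] at horth
    simpa [ha, Fintype.card_ne_zero] using horth
  simpa [hconst, Fintype.card_ne_zero] using hsum

/-- If `W Φ = Φ` and `a_u = ⟨ψ_u, Φ⟩`, then `a_u = a_v` for adjacent `u, v`.
Consequently, if the graph is connected and `Φ` is orthogonal to the uniform superposition,
then all `a_u` vanish. -/
theorem walk_fixed_vector_constant_overlaps
    {V : Type*} [Fintype V] [DecidableEq V] [Nonempty V] {d : ℕ} (hd : 1 ≤ d)
    (σ : V × Fin d → V × Fin d) (hσ : ∀ x, σ (σ x) = x)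
    (Φ : EuclideanSpace ℂ (V × Fin d)) (hW : walkOp σ Φ = Φ)
    (a : V → ℂ) (ha : ∀ u, a u = ⟪psiState V d u, Φ⟫_ℂ) :
    (∀ u v : V, adjEntry σ u v ≠ 0 → a u = a v) ∧
    ((∀ u v : V, Relation.ReflTransGen (fun p q : V => adjEntry σ p q ≠ 0) u v) →
      ⟪uniformState V d, Φ⟫_ℂ = 0 → ∀ u : V, a u = 0) :=
  walk_fixed_vector_constant_overlaps_general σ hσ Φ hW a ha
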